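/- For every internal node i ∈ {1, …, m}, define the vector K^i ∈ ℝ^{m+n} by K^i_j = 1 if j = i, K^i_j = −1 if pa(j) = i, and K^i_j = 0 otherwise, and let e_j denote the j-th canonical basis vector of ℝ^{m+n}. Then the family (K^1, …, K^m, e_{m+1}, …, e_{m+n}) is a basis of ℝ^{m+n}; moreover, for every j ∈ {1, …, m+n}, e_j = Σ_{i=1}^{m} U_{ij} K^i + Σ_{i=m+1}^{m+n} U_{ij} e_i, i.e. U is the change-of-basis matrix between the canonical basis and this basis. In particular, the matrix U is invertible. -/
import Mathlib


/-!
Context: rooted phylogenetic tree with `m ≥ 1` internal nodes (indices `0, …, m-1` of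
`Fin (m+n)`, node `0` the root) and `n ≥ 2` tips (indices `m, …, m+n-1`), encoded by a
parent map `pa` (with the convention `pa root = root`).  `U i j = 1` iff `j ∈ Par(i)`.

STATEMENT 1: the family `(K^1, …, K^m, e_{m+1}, …, e_{m+n})` is a basis of `ℝ^{m+n}`;
moreover `e_j = Σ_{i<m} U i j • K^i + Σ_{i≥m} U i j • e_i` for every `j` (i.e. `U` is the
change-of-basis matrix), and in particular `U` is invertible.
-/

open scoped Classical

/-- `j ∈ Par(i)`: `j` is `i` or an ancestor of `i`. -/
def isAncestorOf (N : ℕ) (pa : Fin N → Fin N) (i j : Fin N) : Prop :=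
  ∃ r : ℕ, pa^[r] i = j

/-- The matrix `U` of the tree: `U i j = 1` iff `j ∈ Par(i)`. -/
noncomputable def Umat (m n : ℕ) (pa : Fin (m + n) → Fin (m + n)) :
    Matrix (Fin (m + n)) (Fin (m + n)) ℝ :=
  fun i j => if isAncestorOf (m + n) pa i j then 1 else 0

/-- The vector `K^i`: `1` at `i`, `-1` at each child of `i`, `0` elsewhere. -/
noncomputable def Kvec (m n : ℕ) (pa : Fin (m + n) → Fin (m + n)) (i : Fin (m + n)) :
    Fin (m + n) → ℝ :=
  fun j => if j = i then 1 else if pa j = i then -1 else 0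

/-- The family `(K^1, …, K^m, e_{m+1}, …, e_{m+n})`. -/
noncomputable def mixedFamily (m n : ℕ) (pa : Fin (m + n) → Fin (m + n)) (i : Fin (m + n)) :
    Fin (m + n) → ℝ :=
  if (i : ℕ) < m then Kvec m n pa i else Pi.single i 1

theorem stmt1 (m n : ℕ) (hm : 1 ≤ m) (hn : 2 ≤ n)
    (pa : Fin (m + n) → Fin (m + n))
    (hroot : pa ⟨0, by omega⟩ = ⟨0, by omega⟩)
    (hlt : ∀ i : Fin (m + n), i ≠ ⟨0, by omega⟩ → (pa i : ℕ) < (i : ℕ))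
    (htips : ∀ j : Fin (m + n),
      (∃ i : Fin (m + n), i ≠ ⟨0, by omega⟩ ∧ pa i = j) ↔ (j : ℕ) < m) :
    LinearIndependent ℝ (mixedFamily m n pa) ∧
      Submodule.span ℝ (Set.range (mixedFamily m n pa)) = ⊤ ∧
      (∀ j : Fin (m + n),
        (Pi.single j 1 : Fin (m + n) → ℝ) =
          ∑ i : Fin (m + n), Umat m n pa i j • mixedFamily m n pa i) ∧
      IsUnit (Umat m n pa) := by
  have hN : 0 < m + n := by omega
  set root : Fin (m + n) := ⟨0, hN⟩ with hrootdef
  have pa_le : ∀ x : Fin (m + n), (pa x : ℕ) ≤ (x : ℕ) := by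
    intro x
    by_cases hx : x = root
    · subst hx; rw [hroot]
    · exact le_of_lt (hlt x hx)
  have anc_le : ∀ i j : Fin (m + n), isAncestorOf (m + n) pa i j → (j : ℕ) ≤ (i : ℕ) := by
    rintro i j ⟨r, rfl⟩
    induction r with
    | zero => simp
    | succ r ih =>
        rw [Function.iterate_succ_apply']
        exact le_trans (pa_le _) ih
  have root_fix : ∀ r : ℕ, pa^[r] root = root := by
    intro r
    induction r with
    | zero => rfl
    | succ r ih => rw [Function.iterate_succ_apply', ih, hroot]
  have U_self : ∀ j : Fin (m + n), Umat m n pa j j = 1 := fun j =>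
    if_pos ⟨0, rfl⟩
  have U_root : ∀ j : Fin (m + n), Umat m n pa root j = if root = j then 1 else 0 := by
    intro j
    unfold Umat
    by_cases h : root = j
    · rw [if_pos ⟨0, h⟩, if_pos h]
    · rw [if_neg, if_neg h]
      rintro ⟨r, hr⟩
      exact h (by rw [← hr, root_fix])
  have U_pa : ∀ k j : Fin (m + n), k ≠ root →
      Umat m n pa k j - Umat m n pa (pa k) j = if k = j then 1 else 0 := by
    intro k j hk
    have hpk : (pa k : ℕ) < (k : ℕ) := hlt k hk
    by_cases hkj : k = j
    · subst hkj
      rw [if_pos rfl, U_self]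
      have : Umat m n pa (pa k) k = 0 := by
        unfold Umat
        rw [if_neg]
        intro h
        exact absurd (anc_le _ _ h) (by omega)
      rw [this]; ring
    · rw [if_neg hkj]
      have : Umat m n pa k j = Umat m n pa (pa k) j := by
        unfold Umat
        congr 1
        apply propext
        constructor
        · rintro ⟨r, hr⟩
          cases r with
          | zero => exact absurd hr hkj
          | succ r => exact ⟨r, by rwa [Function.iterate_succ_apply] at hr⟩
        · rintro ⟨r, hr⟩
          exact ⟨r + 1, by rwa [Function.iterate_succ_apply]⟩
      rw [this]; ring
  -- expansion
  have hexp : ∀ j : Fin (m + n),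
      (Pi.single j 1 : Fin (m + n) → ℝ) =
        ∑ i : Fin (m + n), Umat m n pa i j • mixedFamily m n pa i := by
    intro j
    funext k
    rw [Finset.sum_apply]
    simp only [Pi.smul_apply, smul_eq_mul]
    by_cases hk : k = root
    · have hrm : (root : ℕ) < m := by simp [hrootdef]; omega
      have hsum : ∀ i : Fin (m + n), Umat m n pa i j * mixedFamily m n pa i k =
          if i = k then Umat m n pa k j else 0 := by
        intro i
        by_cases hik : i = k
        · subst hik
          rw [if_pos rfl]
          have : mixedFamily m n pa i i = 1 := by
            unfold mixedFamily
            subst hk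
            rw [if_pos hrm]
            unfold Kvec
            rw [if_pos rfl]
          rw [hk] at this ⊢
          rw [this, mul_one]
        · rw [if_neg hik]
          have : mixedFamily m n pa i k = 0 := by
            unfold mixedFamily
            by_cases him : (i : ℕ) < m
            · rw [if_pos him]
              unfold Kvec
              rw [if_neg (fun h => hik h.symm), if_neg]
              rw [hk, hroot]
              exact fun h => hik (h.symm.trans hk.symm) |>.elim
            · rw [if_neg him, Pi.single_apply, if_neg (fun h => hik h.symm)]
          rw [this, mul_zero]
      rw [Finset.sum_congr rfl (fun i _ => hsum i), Finset.sum_ite_eq' Finset.univ k]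
      rw [if_pos (Finset.mem_univ k), hk, U_root, Pi.single_apply]
    · have hpk : (pa k : ℕ) < (k : ℕ) := hlt k hk
      have hpkm : ((pa k : Fin (m + n)) : ℕ) < m := (htips (pa k)).1 ⟨k, hk, rfl⟩
      have hpkk : pa k ≠ k := fun h => by rw [h] at hpk; omega
      have hsum : ∀ i : Fin (m + n), Umat m n pa i j * mixedFamily m n pa i k =
          (if i = k then Umat m n pa k j else 0) +
            (if i = pa k then -(Umat m n pa (pa k) j) else 0) := by
        intro i
        by_cases hik : i = k
        · subst hik
          rw [if_pos rfl, if_neg (fun h => hpkk h.symm)]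
          have : mixedFamily m n pa i i = 1 := by
            unfold mixedFamily
            by_cases him : (i : ℕ) < m
            · rw [if_pos him]; unfold Kvec; rw [if_pos rfl]
            · rw [if_neg him, Pi.single_apply, if_pos rfl]
          rw [this, mul_one, add_zero]
        · rw [if_neg hik]
          by_cases hip : i = pa k
          · subst hip
            rw [if_pos rfl]
            have : mixedFamily m n pa (pa k) k = -1 := by
              unfold mixedFamily
              rw [if_pos hpkm]
              unfold Kvec
              rw [if_neg (fun h => hik h.symm), if_pos rfl]
            rw [this, zero_add]; ring
          · rw [if_neg hip, add_zero]
            have : mixedFamily m n pa i k = 0 := by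
              unfold mixedFamily
              by_cases him : (i : ℕ) < m
              · rw [if_pos him]
                unfold Kvec
                rw [if_neg (fun h => hik h.symm), if_neg (fun h => hip h.symm)]
              · rw [if_neg him, Pi.single_apply, if_neg (fun h => hik h.symm)]
            rw [this, mul_zero]
      rw [Finset.sum_congr rfl (fun i _ => hsum i), Finset.sum_add_distrib,
        Finset.sum_ite_eq' Finset.univ k, Finset.sum_ite_eq' Finset.univ (pa k),
        if_pos (Finset.mem_univ k), if_pos (Finset.mem_univ (pa k))]
      have := U_pa k j hk
      rw [Pi.single_apply]
      by_cases h : k = j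
      · rw [if_pos h] at this ⊢
        linarith [this]
      · rw [if_neg h] at this ⊢
        linarith [this]
  -- span
  have hsingle : ∀ j : Fin (m + n),
      (Pi.single j 1 : Fin (m + n) → ℝ) ∈
        Submodule.span ℝ (Set.range (mixedFamily m n pa)) := by
    intro j
    rw [hexp j]
    exact Submodule.sum_mem _ fun i _ =>
      Submodule.smul_mem _ _ (Submodule.subset_span ⟨i, rfl⟩)
  have hspan : Submodule.span ℝ (Set.range (mixedFamily m n pa)) = ⊤ := by
    rw [eq_top_iff, ← (Pi.basisFun ℝ (Fin (m + n))).span_eq]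
    apply Submodule.span_le.2
    rintro x ⟨i, rfl⟩
    simpa [Pi.basisFun_apply] using hsingle i
  have hli : LinearIndependent ℝ (mixedFamily m n pa) := by
    apply linearIndependent_of_top_le_span_of_card_eq_finrank hspan.ge
    simp [Module.finrank_fin_fun]
  -- U is a unit
  have hmul : (Umat m n pa).transpose * Matrix.of (mixedFamily m n pa) = 1 := by
    ext j k
    have h := congrFun (hexp j) k
    rw [Finset.sum_apply] at h
    simp only [Pi.smul_apply, smul_eq_mul] at h
    rw [Matrix.mul_apply, Matrix.one_apply]
    simp only [Matrix.transpose_apply, Matrix.of_apply]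
    rw [← h, Pi.single_apply]
    by_cases hjk : j = k
    · rw [if_pos hjk, if_pos hjk.symm]
    · rw [if_neg hjk, if_neg (fun h => hjk h.symm)]
  have hmul' : Matrix.of (mixedFamily m n pa) * (Umat m n pa).transpose = 1 :=
    mul_eq_one_comm.mp hmul
  have hUt : IsUnit (Umat m n pa).transpose := ⟨⟨_, _, hmul, hmul'⟩, rfl⟩
  have hU : IsUnit (Umat m n pa) := by
    rw [Matrix.isUnit_iff_isUnit_det] at hUt ⊢
    rwa [Matrix.det_transpose] at hUt
  exact ⟨hli, hspan, hexp, hU⟩
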